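/- arXiv:1606.05601 — 2 statements merged into one kernel-verified Lean document; each statement's English description precedes it below -/
import Mathlib

section
/- Let A(t) be a continuous T-periodic K×K real matrix-valued function which is cooperative and strongly irreducible, and let U : ℝ → (K×K real matrices) be the fundamental matrix solution of U′(t) = A(t)U(t), U(0) = I. Let r be the spectral radius of the monodromy matrix U(T). Then r > 0, there exists a vector v ∈ ℝ^K with all components strictly positive such that U(T)v = r v, and, setting λ = (1/T) ln r, the function φ(t) = e^{−λt} U(t) v is T-periodic, has all components strictly positive for every t, and satisfies −φ′(t) + A(t)φ(t) = λφ(t) for all t ∈ ℝ. -/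
/-!
Cooperativity makes the nonnegative cone forward invariant for `x' = A(t) x`, and strong
irreducibility makes a nonzero nonnegative solution strictly positive at every positive time: a
vanishing component would have an interior minimum there, forcing `(A(t) x(t))_k = 0`, which an
edge of `A(t)` from the zero components into the positive ones forbids. Hence the monodromy matrix
`U(T)` is entrywise positive. For it, take an eigenvector `u` of an eigenvalue of modulus `r`;
then `U(T)|u| ≥ r|u|`, and if this were not an equality, `U(T)` would stretch the positive vector
`U(T)|u|` by a factor `r + ε`, so by Gelfand's formula its spectral radius would exceed `r`. Thus
`v = |u|` is a positive eigenvector for `r > 0`. Uniqueness for the periodic linear system gives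
`U(t + T) v = r U(t) v`, so `φ` is `T`-periodic; it is positive on `[0, T)`, hence everywhere, and
the eigen-equation for `φ` is a direct computation.
-/

open Matrix Set Filter Topology

def Matrix.IsCooperative {ι : Type*} (M : Matrix ι ι ℝ) : Prop :=
  ∀ k j, k ≠ j → 0 ≤ M k j

namespace Matrix.IsCooperative

variable {ι : Type*} [Fintype ι] {M : Matrix ι ι ℝ} {x : ι → ℝ}

theorem diag_mul_le_mulVec (hM : M.IsCooperative) (hx : ∀ j, 0 ≤ x j) (k : ι) :
    M k k * x k ≤ (M *ᵥ x) k := by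
  classical
  rw [mulVec, dotProduct, ← Finset.add_sum_erase _ _ (Finset.mem_univ k), le_add_iff_nonneg_right]
  exact Finset.sum_nonneg fun m hm => mul_nonneg (hM k m (Finset.ne_of_mem_erase hm).symm) (hx m)

theorem pos_of_mulVec_apply_eq_zero (hM : M.IsCooperative)
    (hirr : ∀ S : Set ι, S.Nonempty → Sᶜ.Nonempty → ∃ k ∈ S, ∃ j ∈ Sᶜ, M k j ≠ 0)
    (hx : ∀ j, 0 ≤ x j) (hx0 : x ≠ 0) (hMx : ∀ k, x k = 0 → (M *ᵥ x) k = 0) (k : ι) :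
    0 < x k := by
  by_contra! hk
  obtain ⟨j₀, hj₀⟩ := Function.ne_iff.1 hx0
  obtain ⟨k, hk, j, hj, hkj⟩ :=
    hirr {k | x k = 0} ⟨k, le_antisymm hk (hx k)⟩ ⟨j₀, hj₀⟩
  have hterms : ∀ m ∈ Finset.univ, 0 ≤ M k m * x m := fun m _ => by
    rcases eq_or_ne k m with rfl | hkm
    · simp [show x k = 0 from hk]
    · exact mul_nonneg (hM k m hkm) (hx m)
  have hzero := (Finset.sum_eq_zero_iff_of_nonneg hterms).1 (hMx k hk) j (Finset.mem_univ j)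
  have hkj' : k ≠ j := fun h => hj (h ▸ hk)
  exact (mul_pos ((hM k j hkj').lt_of_ne' hkj) ((hx j).lt_of_ne' hj)).ne' hzero

end Matrix.IsCooperative

theorem exists_pos_forall_mul_le {ι : Type*} [Finite ι] (y : ι → ℝ) {z : ι → ℝ}
    (hz : ∀ k, 0 < z k) :
    ∃ ε > 0, ∀ k, ε * y k ≤ z k := by
  have hnear : ∀ k, ∀ᶠ ε in 𝓝 (0 : ℝ), ε * y k < z k := fun k =>
    (continuous_id.mul continuous_const).continuousAt.eventually_lt continuousAt_const
      (by simpa using hz k)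
  obtain ⟨ε, hε, hε0⟩ :=
    ((eventually_all.2 hnear).filter_mono nhdsWithin_le_nhds |>.and
      (self_mem_nhdsWithin : Ioi (0 : ℝ) ∈ 𝓝[>] 0)).exists
  exact ⟨ε, hε0, fun k => (hε k).le⟩

section Perron

variable {ι : Type*} [Fintype ι]

attribute [local instance] Matrix.linftyOpNormedAddCommGroup Matrix.linftyOpNormedRing
  Matrix.linftyOpNormedAlgebra

theorem spectralRadius_le_of_forall_eigenvalue [DecidableEq ι] {Q : Matrix ι ι ℂ} {r : ℝ}
    (h : ∀ μ : ℂ, ∀ v, v ≠ 0 → Q *ᵥ v = μ • v → ‖μ‖ ≤ r) :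
    spectralRadius ℂ Q ≤ ENNReal.ofReal r := by
  refine iSup₂_le fun μ hμ => ?_
  rw [← spectrum_toLin', ← Module.End.hasEigenvalue_iff_mem_spectrum] at hμ
  obtain ⟨v, hv⟩ := hμ.exists_hasEigenvector
  rw [← ENNReal.ofReal_coe_nnreal, coe_nnnorm]
  exact ENNReal.ofReal_le_ofReal (h μ v hv.2 (by simpa using hv.apply_eq_smul))

theorem pow_mul_le_pow_mulVec [DecidableEq ι] {P : Matrix ι ι ℝ} (hP : ∀ k j, 0 ≤ P k j)
    {y : ι → ℝ} {c : ℝ} (hc : 0 ≤ c) (h : ∀ k, c * y k ≤ (P *ᵥ y) k) (n : ℕ) (k : ι) :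
    c ^ n * y k ≤ (P ^ n *ᵥ y) k := by
  induction n generalizing k with
  | zero => simp
  | succ n ih =>
    calc c ^ (n + 1) * y k = c ^ n * (c * y k) := by ring
      _ ≤ c ^ n * (P *ᵥ y) k := mul_le_mul_of_nonneg_left (h k) (pow_nonneg hc n)
      _ = (P *ᵥ (c ^ n • y)) k := by simp [mulVec_smul]
      _ ≤ (P *ᵥ (P ^ n *ᵥ y)) k :=
        Finset.sum_le_sum fun j _ => mul_le_mul_of_nonneg_left (ih j) (hP k j)
      _ = (P ^ (n + 1) *ᵥ y) k := by rw [pow_succ', ← mulVec_mulVec]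

theorem ofReal_le_spectralRadius_of_smul_le_mulVec [DecidableEq ι] [Nonempty ι] {P : Matrix ι ι ℝ}
    (hP : ∀ k j, 0 ≤ P k j) {y : ι → ℝ} (hy : ∀ k, 0 < y k) {c : ℝ} (hc : 0 ≤ c)
    (h : ∀ k, c * y k ≤ (P *ᵥ y) k) :
    ENNReal.ofReal c ≤ spectralRadius ℂ (P.map ((↑) : ℝ → ℂ)) := by
  obtain ⟨k⟩ := ‹Nonempty ι›
  set Q := P.map ((↑) : ℝ → ℂ)
  set z : ι → ℂ := fun j => y j
  have hz : 0 < ‖z‖ := norm_pos_iff.2 (Function.ne_iff.2 ⟨k, by simpa [z] using (hy k).ne'⟩)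
  set δ := y k / ‖z‖
  have hδ : 0 < δ := div_pos (hy k) hz
  have hnorm (n : ℕ) : c ^ n * δ ≤ ‖Q ^ n‖ := by
    have hcast : (((P ^ n *ᵥ y) k : ℝ) : ℂ) = (Q ^ n *ᵥ z) k := by
      have hpow : Q ^ n = (P ^ n).map Complex.ofRealHom :=
        (Matrix.map_pow P Complex.ofRealHom n).symm
      rw [hpow]
      exact Complex.ofRealHom.map_mulVec _ _ _
    calc c ^ n * δ = c ^ n * y k / ‖z‖ := mul_div_assoc _ _ _ |>.symm
      _ ≤ (P ^ n *ᵥ y) k / ‖z‖ := by gcongr; exact pow_mul_le_pow_mulVec hP hc h n k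
      _ ≤ ‖(Q ^ n *ᵥ z) k‖ / ‖z‖ := by
        gcongr; rw [← hcast, Complex.norm_real]; exact le_abs_self _
      _ ≤ ‖Q ^ n *ᵥ z‖ / ‖z‖ := by gcongr; exact norm_le_pi_norm _ k
      _ ≤ ‖Q ^ n‖ := div_le_of_le_mul₀ hz.le (norm_nonneg _) (linfty_opNorm_mulVec _ _)
  have hlim : Tendsto (fun n : ℕ => ENNReal.ofReal (c * δ ^ (1 / (n : ℝ)))) atTop
      (𝓝 (ENNReal.ofReal c)) := by
    have : Tendsto (fun n : ℕ => δ ^ (1 / (n : ℝ))) atTop (𝓝 1) := by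
      simpa using tendsto_const_nhds.rpow tendsto_one_div_atTop_nhds_zero_nat (Or.inl hδ.ne')
    simpa using ENNReal.tendsto_ofReal (this.const_mul c)
  refine le_of_tendsto_of_tendsto hlim
    (spectrum.pow_norm_pow_one_div_tendsto_nhds_spectralRadius Q) ?_
  filter_upwards [eventually_ne_atTop 0] with n hn
  refine ENNReal.ofReal_le_ofReal ?_
  calc c * δ ^ (1 / (n : ℝ)) = (c ^ n * δ) ^ (1 / (n : ℝ)) := by
        rw [Real.mul_rpow (by positivity) hδ.le, one_div, Real.pow_rpow_inv_natCast hc hn]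
    _ ≤ ‖Q ^ n‖ ^ (1 / (n : ℝ)) := Real.rpow_le_rpow (by positivity) (hnorm n) (by positivity)

theorem norm_mul_norm_le_mulVec_norm {P : Matrix ι ι ℝ} (hP : ∀ k j, 0 ≤ P k j) {μ : ℂ}
    {u : ι → ℂ} (hu : P.map ((↑) : ℝ → ℂ) *ᵥ u = μ • u) (k : ι) :
    ‖μ‖ * ‖u k‖ ≤ (P *ᵥ fun j => ‖u j‖) k :=
  calc ‖μ‖ * ‖u k‖ = ‖∑ j, (P k j : ℂ) * u j‖ := by
        rw [← norm_mul, ← smul_eq_mul, ← Pi.smul_apply, ← hu]; rfl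
    _ ≤ ∑ j, ‖(P k j : ℂ) * u j‖ := norm_sum_le _ _
    _ = (P *ᵥ fun j => ‖u j‖) k := Finset.sum_congr rfl fun j _ => by
        rw [norm_mul, Complex.norm_real, Real.norm_of_nonneg (hP k j)]

theorem mulVec_pos_of_pos {P : Matrix ι ι ℝ} (hP : ∀ k j, 0 < P k j) {w : ι → ℝ}
    (hw : ∀ j, 0 ≤ w j) (hw0 : w ≠ 0) (k : ι) : 0 < (P *ᵥ w) k := by
  obtain ⟨j, hj⟩ := Function.ne_iff.1 hw0
  exact Finset.sum_pos' (fun m _ => mul_nonneg (hP k m).le (hw m))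
    ⟨j, Finset.mem_univ j, mul_pos (hP k j) ((hw j).lt_of_ne' hj)⟩

theorem exists_pos_eigenvector_of_pos [DecidableEq ι] {P : Matrix ι ι ℝ} (hP : ∀ k j, 0 < P k j)
    {r : ℝ} (hr : IsGreatest {a : ℝ | ∃ μ : ℂ,
        (∃ v : ι → ℂ, v ≠ 0 ∧ P.map ((↑) : ℝ → ℂ) *ᵥ v = μ • v) ∧ a = ‖μ‖} r) :
    0 < r ∧ ∃ v : ι → ℝ, (∀ k, 0 < v k) ∧ P *ᵥ v = r • v := by
  obtain ⟨⟨μ, ⟨u, hu0, hu⟩, rfl⟩, hmax⟩ := hr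
  obtain ⟨k₀, -⟩ := Function.ne_iff.1 hu0
  have : Nonempty ι := ⟨k₀⟩
  set w : ι → ℝ := fun j => ‖u j‖
  have hw : ∀ j, 0 ≤ w j := fun j => norm_nonneg _
  have hw0 : w ≠ 0 := fun h => hu0 (funext fun j => norm_eq_zero.1 (congrFun h j))
  have hsub : ∀ k, ‖μ‖ * w k ≤ (P *ᵥ w) k :=
    norm_mul_norm_le_mulVec_norm (fun k j => (hP k j).le) hu
  have hPw := mulVec_pos_of_pos hP hw hw0
  have heig : P *ᵥ w = ‖μ‖ • w := by
    -- otherwise `P *ᵥ w ≫ 0` is stretched by `P` by a factor exceeding `‖μ‖`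
    by_contra hne
    have hz := mulVec_pos_of_pos hP (w := P *ᵥ w - ‖μ‖ • w) (fun k => sub_nonneg.2 (hsub k))
      (sub_ne_zero.2 hne)
    obtain ⟨ε, hε, hεle⟩ := exists_pos_forall_mul_le (P *ᵥ w) hz
    have hgrow : ∀ k, (‖μ‖ + ε) * (P *ᵥ w) k ≤ (P *ᵥ (P *ᵥ w)) k := fun k => by
      have := hεle k
      rw [mulVec_sub, mulVec_smul] at this
      simp only [Pi.sub_apply, Pi.smul_apply, smul_eq_mul] at this
      linarith
    have := (ofReal_le_spectralRadius_of_smul_le_mulVec (fun k j => (hP k j).le) hPw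
      (by positivity) hgrow).trans
      (spectralRadius_le_of_forall_eigenvalue fun ν v hv h => hmax ⟨ν, ⟨v, hv, h⟩, rfl⟩)
    rw [ENNReal.ofReal_le_ofReal_iff (norm_nonneg _)] at this
    linarith
  have hPw' : ∀ k, 0 < ‖μ‖ * w k := fun k => by simpa [heig] using hPw k
  have hμ : 0 < ‖μ‖ := pos_of_mul_pos_left (hPw' k₀) (hw k₀)
  exact ⟨hμ, w, fun k => pos_of_mul_pos_right (hPw' k) hμ.le, heig⟩

end Perron

theorem HasDerivAt.nonpos_of_eventually_le_left {f : ℝ → ℝ} {f' a : ℝ} (hf : HasDerivAt f f' a)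
    (h : ∀ᶠ t in 𝓝[<] a, f a ≤ f t) : f' ≤ 0 := by
  refine le_of_tendsto ((hasDerivAt_iff_tendsto_slope.1 hf).mono_left (nhdsLT_le_nhdsNE a)) ?_
  filter_upwards [h, self_mem_nhdsWithin] with t ht (hta : t < a)
  rw [slope_def_field]
  exact div_nonpos_of_nonneg_of_nonpos (sub_nonneg.2 ht) (sub_nonpos.2 hta.le)

theorem pos_of_hasDerivAt_pos_of_eq_zero {ι : Type*} [Finite ι] {y y' : ℝ → ι → ℝ} {b : ℝ}
    (hy : ∀ t, HasDerivAt y (y' t) t) (h0 : ∀ k, 0 < y 0 k)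
    (hexit : ∀ t ∈ Ioc 0 b, ∀ k, (∀ j, 0 ≤ y t j) → y t k = 0 → 0 < y' t k) :
    ∀ t ∈ Icc 0 b, ∀ k, 0 < y t k := by
  have hyc (k : ι) : Continuous fun t => y t k :=
    continuous_iff_continuousAt.2 fun t => (hasDerivAt_pi.1 (hy t) k).continuousAt
  by_contra! ⟨t₁, ht₁, k₁, hk₁⟩
  set S := Icc 0 b ∩ ⋃ k, {t | y t k ≤ 0}
  have hSbdd : BddBelow S := ⟨0, fun t ht => ht.1.1⟩
  have ht₀ : sInf S ∈ S :=
    (isClosed_Icc.inter (isClosed_iUnion_of_finite fun k => isClosed_le (hyc k) continuous_const)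
      ).csInf_mem ⟨t₁, ht₁, mem_iUnion.2 ⟨k₁, hk₁⟩⟩ hSbdd
  set t₀ := sInf S
  obtain ⟨⟨ht₀0, ht₀b⟩, hk⟩ := ht₀
  obtain ⟨k, hk : y t₀ k ≤ 0⟩ := mem_iUnion.1 hk
  have hbefore : ∀ t ∈ Ico 0 t₀, ∀ j, 0 < y t j := fun t ht j => by
    by_contra! hj
    exact (csInf_le hSbdd ⟨⟨ht.1, ht.2.le.trans ht₀b⟩, mem_iUnion.2 ⟨j, hj⟩⟩).not_gt ht.2
  have ht₀pos : 0 < t₀ := ht₀0.lt_of_ne fun h => (h0 k).not_ge (h ▸ hk)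
  have hat (j : ι) : 0 ≤ y t₀ j :=
    closure_minimal (fun t ht => (hbefore t ht j).le) (isClosed_le continuous_const (hyc j))
      ((closure_Ico ht₀pos.ne).symm ▸ right_mem_Icc.2 ht₀pos.le)
  have hyk : y t₀ k = 0 := le_antisymm hk (hat k)
  refine (hexit t₀ ⟨ht₀pos, ht₀b⟩ k hat hyk).not_ge
    ((hasDerivAt_pi.1 (hy t₀) k).nonpos_of_eventually_le_left ?_)
  filter_upwards [Ioo_mem_nhdsLT ht₀pos] with t ht
  rw [hyk]
  exact (hbefore t ⟨ht.1.le, ht.2⟩ k).le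

section LinearODE

variable {ι : Type*} [Fintype ι] {A : ℝ → Matrix ι ι ℝ} {x : ℝ → ι → ℝ}

theorem exists_abs_apply_le (hA : Continuous A) (a b : ℝ) :
    ∃ M, ∀ t ∈ Icc a b, ∀ k j, |A t k j| ≤ M := by
  obtain ⟨M, hM⟩ := isCompact_Icc.bddAbove_image (f := fun t => ∑ k, ∑ j, |A t k j|)
    (continuous_finsetSum _ fun k _ => continuous_finsetSum _ fun j _ =>
      (hA.matrix_elem k j).abs).continuousOn
  refine ⟨M, fun t ht k j => le_trans ?_ (hM (mem_image_of_mem _ ht))⟩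
  calc |A t k j| ≤ ∑ j, |A t k j| :=
        Finset.single_le_sum (f := fun j => |A t k j|) (fun j _ => abs_nonneg _)
          (Finset.mem_univ j)
    _ ≤ ∑ k, ∑ j, |A t k j| :=
        Finset.single_le_sum (f := fun k => ∑ j, |A t k j|)
          (fun k _ => Finset.sum_nonneg fun j _ => abs_nonneg _) (Finset.mem_univ k)

section

attribute [local instance] Matrix.linftyOpNormedAddCommGroup

theorem exists_lipschitzWith_mulVec (hA : Continuous A) (a b : ℝ) :
    ∃ C, ∀ t ∈ Icc a b, LipschitzWith C (A t *ᵥ ·) := by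
  -- the `L∞` operator norm induces the product topology definitionally, so `hA` applies as is
  obtain ⟨C, hC⟩ := isCompact_Icc.exists_bound_of_continuousOn hA.continuousOn
  refine ⟨C.toNNReal, fun t ht => LipschitzWith.of_dist_le_mul fun u v => ?_⟩
  rw [dist_eq_norm, dist_eq_norm, ← mulVec_sub]
  exact (linfty_opNorm_mulVec _ _).trans
    (mul_le_mul_of_nonneg_right ((hC t ht).trans (Real.le_coe_toNNReal C)) (norm_nonneg _))

end

theorem eq_of_hasDerivAt_mulVec (hA : Continuous A) {y : ℝ → ι → ℝ}
    (hx : ∀ t, HasDerivAt x (A t *ᵥ x t) t) (hy : ∀ t, HasDerivAt y (A t *ᵥ y t) t)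
    {t₀ : ℝ} (h : x t₀ = y t₀) : x = y := by
  funext t
  obtain ⟨C, hC⟩ := exists_lipschitzWith_mulVec hA (min t₀ t - 1) (max t₀ t + 1)
  exact ODE_solution_unique_of_mem_Ioo (s := fun _ => univ)
    (fun s hs => (hC s (Ioo_subset_Icc_self hs)).lipschitzOnWith)
    ⟨by linarith [min_le_left t₀ t], by linarith [le_max_left t₀ t]⟩
    (fun s _ => ⟨hx s, mem_univ _⟩) (fun s _ => ⟨hy s, mem_univ _⟩) h
    ⟨by linarith [min_le_right t₀ t], by linarith [le_max_right t₀ t]⟩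

theorem nonneg_of_hasDerivAt_mulVec (hA : Continuous A) (hcoop : ∀ t, (A t).IsCooperative)
    (hx : ∀ t, HasDerivAt x (A t *ᵥ x t) t) (h0 : ∀ k, 0 ≤ x 0 k) {t : ℝ} (ht : 0 ≤ t)
    (k : ι) : 0 ≤ x t k := by
  obtain ⟨M, hM⟩ := exists_abs_apply_le hA 0 t
  set L := Fintype.card ι * M + 1
  refine le_of_forall_pos_lt_add fun ε hε => ?_
  -- `L` exceeds every row sum of `A` on `[0, t]`, so adding `δ exp (L s)` to each component
  -- produces a function that cannot leave the open positive cone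
  set δ := ε / Real.exp (L * t)
  have hδ : 0 < δ := by positivity
  have hpert := pos_of_hasDerivAt_pos_of_eq_zero (b := t)
    (y := fun s => x s + (δ * Real.exp (L * s)) • (1 : ι → ℝ))
    (fun s => (hx s).add ((((hasDerivAt_id s).const_mul L).exp.const_mul δ).smul_const 1))
    ?_ ?_ t ⟨ht, le_rfl⟩ k
  · simpa [δ, div_mul_cancel₀ _ (Real.exp_pos _).ne'] using hpert
  · intro k
    simpa using add_pos_of_nonneg_of_pos (h0 k) hδ
  · intro s hs k hnn hk
    have hAy := (hcoop s).diag_mul_le_mulVec hnn k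
    have hrow : (A s *ᵥ 1) k ≤ Fintype.card ι * M :=
      calc (A s *ᵥ 1) k = ∑ j, A s k j := by simp [mulVec, dotProduct]
        _ ≤ ∑ _j : ι, M :=
          Finset.sum_le_sum fun j _ => (le_abs_self _).trans (hM s ⟨hs.1.le, hs.2⟩ k j)
        _ = _ := by simp
    have he : 0 < δ * Real.exp (L * s) := by positivity
    rw [hk, mul_zero, mulVec_add, mulVec_smul] at hAy
    have hgrowth : δ * (Real.exp (L * s) * L) =
        δ * Real.exp (L * s) * (Fintype.card ι * M) + δ * Real.exp (L * s) := by
      simp only [L]; ring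
    simp only [Pi.add_apply, Pi.smul_apply, Pi.one_apply, smul_eq_mul, mul_one, id_eq] at hAy ⊢
    linarith [mul_le_mul_of_nonneg_left hrow he.le]

theorem pos_of_hasDerivAt_mulVec_of_pos (hA : Continuous A) (hcoop : ∀ t, (A t).IsCooperative)
    (hx : ∀ t, HasDerivAt x (A t *ᵥ x t) t) (h0 : ∀ j, 0 ≤ x 0 j) {k : ι} (hk : 0 < x 0 k)
    {t : ℝ} (ht : 0 ≤ t) : 0 < x t k := by
  obtain ⟨M, hM⟩ := exists_abs_apply_le hA 0 t
  have hderiv (τ : ℝ) := ((hasDerivAt_id τ).const_mul M).exp.mul (hasDerivAt_pi.1 (hx τ) k)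
  -- `A t k k ≥ -M` and cooperativity make `exp (M τ) * x τ k` nondecreasing
  have hmono : MonotoneOn (fun τ => Real.exp (M * τ) * x τ k) (Icc 0 t) := by
    refine monotoneOn_of_hasDerivWithinAt_nonneg (convex_Icc 0 t)
      (HasDerivAt.continuousOn fun τ _ => hderiv τ) (fun τ _ => (hderiv τ).hasDerivWithinAt)
      fun τ hτ => ?_
    rw [interior_Icc] at hτ
    have hnn := nonneg_of_hasDerivAt_mulVec hA hcoop hx h0 hτ.1.le
    have hdiag := (hcoop τ).diag_mul_le_mulVec hnn k
    have hMkk := neg_le_of_abs_le (hM τ (Ioo_subset_Icc_self hτ) k k)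
    have : 0 ≤ M * x τ k + (A τ *ᵥ x τ) k := by nlinarith [hnn k]
    simp only [id_eq, mul_one]
    nlinarith [Real.exp_pos (M * τ)]
  have := hmono ⟨le_rfl, ht⟩ ⟨ht, le_rfl⟩ ht
  simp only [mul_zero, Real.exp_zero, one_mul] at this
  exact pos_of_mul_pos_right (hk.trans_le this) (Real.exp_pos _).le

theorem pos_of_hasDerivAt_mulVec_of_ne_zero (hA : Continuous A) (hcoop : ∀ t, (A t).IsCooperative)
    (hirr : ∀ S : Set ι, S.Nonempty → Sᶜ.Nonempty → ∀ t, ∃ k ∈ S, ∃ j ∈ Sᶜ, A t k j ≠ 0)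
    (hx : ∀ t, HasDerivAt x (A t *ᵥ x t) t) (h0 : ∀ k, 0 ≤ x 0 k) (h0' : x 0 ≠ 0)
    {t : ℝ} (ht : 0 < t) (k : ι) : 0 < x t k := by
  have hnn {s : ℝ} (hs : 0 ≤ s) := nonneg_of_hasDerivAt_mulVec hA hcoop hx h0 hs
  obtain ⟨j, hj⟩ := Function.ne_iff.1 h0'
  have hxj := pos_of_hasDerivAt_mulVec_of_pos hA hcoop hx h0 ((h0 j).lt_of_ne' hj) ht.le
  refine (hcoop t).pos_of_mulVec_apply_eq_zero (fun S h₁ h₂ => hirr S h₁ h₂ t) (hnn ht.le)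
    (Function.ne_iff.2 ⟨j, hxj.ne'⟩) (fun k hk => ?_) k
  -- a vanishing component of a nonnegative solution has an interior minimum
  have hmin : IsLocalMin (fun s => x s k) t := by
    filter_upwards [Ioi_mem_nhds ht] with s hs
    rw [hk]
    exact hnn hs.le k
  exact hmin.hasDerivAt_eq_zero (hasDerivAt_pi.1 (hx t) k)

theorem hasDerivAt_mulVec {U : ℝ → Matrix ι ι ℝ}
    (hU : ∀ t k j, HasDerivAt (fun s => U s k j) ((A t * U t) k j) t) (v : ι → ℝ) (t : ℝ) :
    HasDerivAt (fun s => U s *ᵥ v) (A t *ᵥ (U t *ᵥ v)) t := by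
  rw [mulVec_mulVec]
  exact hasDerivAt_pi.2 fun k => HasDerivAt.fun_sum fun j _ => (hU t k j).mul_const (v j)

theorem fundamental_matrix_pos [DecidableEq ι] (hA : Continuous A)
    (hcoop : ∀ t, (A t).IsCooperative)
    (hirr : ∀ S : Set ι, S.Nonempty → Sᶜ.Nonempty → ∀ t, ∃ k ∈ S, ∃ j ∈ Sᶜ, A t k j ≠ 0)
    {U : ℝ → Matrix ι ι ℝ} (hU0 : U 0 = 1)
    (hU : ∀ t k j, HasDerivAt (fun s => U s k j) ((A t * U t) k j) t) {t : ℝ} (ht : 0 < t)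
    (k j : ι) : 0 < U t k j := by
  have h := pos_of_hasDerivAt_mulVec_of_ne_zero hA hcoop hirr (hasDerivAt_mulVec hU (Pi.single j 1))
    (fun i => by
      simp only [hU0, one_mulVec, Pi.single_apply]
      positivity)
    (by simp only [hU0, one_mulVec, ne_eq, Pi.single_eq_zero_iff, one_ne_zero,
      not_false_eq_true]) ht k
  simpa [mulVec_single_one] using h

end LinearODE

theorem Function.Periodic.exp_smul_of_add_eq_smul {E : Type*} [AddCommGroup E] [Module ℝ E]
    {x : ℝ → E} {T r : ℝ} (hT : T ≠ 0) (hr : 0 < r) (h : ∀ t, x (t + T) = r • x t) :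
    Function.Periodic (fun s => Real.exp (-(Real.log r / T) * s) • x s) T := fun t => by
  have hexp : -(Real.log r / T) * (t + T) = -(Real.log r / T) * t - Real.log r := by
    field_simp
    ring
  simp only [h, smul_smul, hexp, Real.exp_sub, Real.exp_log hr, div_mul_cancel₀ _ hr.ne']

theorem neg_deriv_add_mulVec_exp_smul {ι : Type*} [Fintype ι] {A : ℝ → Matrix ι ι ℝ}
    {x : ℝ → ι → ℝ} {t : ℝ} (hx : HasDerivAt x (A t *ᵥ x t) t) (c : ℝ) :
    -deriv (fun s => Real.exp (-c * s) • x s) t + A t *ᵥ (Real.exp (-c * t) • x t)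
      = c • (Real.exp (-c * t) • x t) := by
  have hexp : HasDerivAt (fun s => Real.exp (-c * s)) (Real.exp (-c * t) * -c) t := by
    simpa using ((hasDerivAt_id t).const_mul (-c)).exp
  rw [(hexp.fun_smul hx).deriv, mulVec_smul]
  module

theorem stmt2_general (K : ℕ) (T : ℝ) (hT : 0 < T)
    (A : ℝ → Matrix (Fin K) (Fin K) ℝ)
    (hAcont : ∀ k j, Continuous fun t => A t k j)
    (hAper : ∀ t, A (t + T) = A t)
    (hAcoop : ∀ t, ∀ k j : Fin K, k ≠ j → 0 ≤ A t k j)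
    (hAirr : ∀ S : Set (Fin K), S.Nonempty → Sᶜ.Nonempty → ∀ t,
      ∃ k ∈ S, ∃ j ∈ Sᶜ, A t k j ≠ 0)
    (U : ℝ → Matrix (Fin K) (Fin K) ℝ)
    (hU0 : U 0 = 1)
    (hUode : ∀ t k j, HasDerivAt (fun s => U s k j) ((A t * U t) k j) t)
    (r : ℝ)
    (hr : IsGreatest {a : ℝ | ∃ μ : ℂ,
        (∃ v : Fin K → ℂ, v ≠ 0 ∧ ((U T).map ((↑) : ℝ → ℂ)).mulVec v = μ • v) ∧
        a = ‖μ‖} r) :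
    0 < r ∧
    ∃ v : Fin K → ℝ, (∀ k, 0 < v k) ∧ (U T).mulVec v = r • v ∧
      (∀ t, (fun s => Real.exp (-(Real.log r / T) * s) • (U s).mulVec v) (t + T)
          = (fun s => Real.exp (-(Real.log r / T) * s) • (U s).mulVec v) t) ∧
      (∀ t k, 0 < Real.exp (-(Real.log r / T) * t) * ((U t).mulVec v k)) ∧
      (∀ t, -deriv (fun s => Real.exp (-(Real.log r / T) * s) • (U s).mulVec v) t
          + (A t).mulVec (Real.exp (-(Real.log r / T) * t) • (U t).mulVec v)
          = (Real.log r / T) • (Real.exp (-(Real.log r / T) * t) • (U t).mulVec v)) := by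
  have hA : Continuous A := continuous_pi fun k => continuous_pi fun j => hAcont k j
  obtain ⟨hr0, v, hv, hUv⟩ :=
    exists_pos_eigenvector_of_pos (fundamental_matrix_pos hA hAcoop hAirr hU0 hUode hT) hr
  set x : ℝ → Fin K → ℝ := fun s => U s *ᵥ v
  have hx : ∀ t, HasDerivAt x (A t *ᵥ x t) t := hasDerivAt_mulVec hUode v
  have hx0 : x 0 = v := by simp [x, hU0]
  -- `t ↦ x (t + T)` and `t ↦ r • x t` solve the same periodic system with the same initial value
  have hshift : ∀ t, x (t + T) = r • x t := congrFun <| eq_of_hasDerivAt_mulVec hA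
    (fun t => by simpa [hAper] using (hx (t + T)).comp_add_const t T)
    (fun t => by simpa [mulVec_smul] using (hx t).fun_const_smul r) (t₀ := 0)
    (by simpa [hx0] using hUv)
  have hper := Function.Periodic.exp_smul_of_add_eq_smul hT.ne' hr0 hshift
  refine ⟨hr0, v, hv, hUv, hper, fun t k => ?_, fun t => neg_deriv_add_mulVec_exp_smul (hx t) _⟩
  obtain ⟨s, hs, hts⟩ := hper.exists_mem_Ico₀ hT t
  have hxs := pos_of_hasDerivAt_mulVec_of_pos hA hAcoop hx (fun j => hx0 ▸ (hv j).le)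
    (hx0 ▸ hv k) hs.1
  have hts_k := congrFun hts k
  simp only [Pi.smul_apply, smul_eq_mul] at hts_k
  exact hts_k ▸ mul_pos (Real.exp_pos _) hxs

/-- For the fundamental matrix solution `U` of `U′ = A(t)U`,
`U(0) = I`, of a continuous, `T`-periodic, cooperative, strongly irreducible
system, the spectral radius `r` of the monodromy matrix `U(T)` is positive,
`U(T)` has an eigenvector `v ≫ 0` for the eigenvalue `r`, and with
`λ = (1/T) ln r`, the function `φ(t) = e^{−λt} U(t) v` is `T`-periodic,
strictly positive, and satisfies `−φ′(t) + A(t)φ(t) = λ φ(t)`. -/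
theorem stmt2 (K : ℕ) (hK : 2 ≤ K) (T : ℝ) (hT : 0 < T)
    (A : ℝ → Matrix (Fin K) (Fin K) ℝ)
    (hAcont : ∀ k j, Continuous fun t => A t k j)
    (hAper : ∀ t, A (t + T) = A t)
    (hAcoop : ∀ t, ∀ k j : Fin K, k ≠ j → 0 ≤ A t k j)
    (hAirr : ∀ S : Set (Fin K), S.Nonempty → Sᶜ.Nonempty → ∀ t,
      ∃ k ∈ S, ∃ j ∈ Sᶜ, A t k j ≠ 0)
    (U : ℝ → Matrix (Fin K) (Fin K) ℝ)
    (hU0 : U 0 = 1)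
    (hUode : ∀ t k j, HasDerivAt (fun s => U s k j) ((A t * U t) k j) t)
    (r : ℝ)
    (hr : IsGreatest {a : ℝ | ∃ μ : ℂ,
        (∃ v : Fin K → ℂ, v ≠ 0 ∧ ((U T).map ((↑) : ℝ → ℂ)).mulVec v = μ • v) ∧
        a = ‖μ‖} r) :
    0 < r ∧
    ∃ v : Fin K → ℝ, (∀ k, 0 < v k) ∧ (U T).mulVec v = r • v ∧
      (∀ t, (fun s => Real.exp (-(Real.log r / T) * s) • (U s).mulVec v) (t + T)
          = (fun s => Real.exp (-(Real.log r / T) * s) • (U s).mulVec v) t) ∧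
      (∀ t k, 0 < Real.exp (-(Real.log r / T) * t) * ((U t).mulVec v k)) ∧
      (∀ t, -deriv (fun s => Real.exp (-(Real.log r / T) * s) • (U s).mulVec v) t
          + (A t).mulVec (Real.exp (-(Real.log r / T) * t) • (U t).mulVec v)
          = (Real.log r / T) • (Real.exp (-(Real.log r / T) * t) • (U t).mulVec v)) :=
  stmt2_general K T hT A hAcont hAper hAcoop hAirr U hU0 hUode r hr
end

section
/- Suppose λ ∈ ℝ admits an eigenfunction ψ : ℝ × ℝ^N → ℝ^K which is continuous, continuously differentiable in t, T-periodic in t, p_l-periodic in each spatial variable x_l, nonnegative and not identically zero, and satisfies −∂_t ψ(t,x) + ∫_{ℝ^N} κ(y−x)[ψ(t,y) − ψ(t,x)] dy + A(t,x) ψ(t,x) = λ ψ(t,x) for all (t,x) ∈ ℝ × ℝ^N. Then λ > max_{x ∈ ℝ^N} h₃(x), where h₃(x) = −1 + λ₃(x). -/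
/-!
A nonnegative nontrivial eigenfunction `ψ` is positive everywhere. In time, each component
satisfies `∂ₜψₖ ≥ (aₖₖ - λ - 1) ψₖ`, so a zero propagates backwards (integrating factor) and,
by periodicity, to all times. If `ψₖ(·, x) ≡ 0`, the equation at `x` forces the nonnegative terms
`∫ κ(y - x) ψₖ(t, y) dy` and `aₖⱼ ψⱼ(t, x)` to vanish. Hence the set of `x` with `ψₖ(·, x) ≡ 0`
is open (`κ > 0` near `0`) as well as closed, and each of its points lies in the corresponding
set for every `j` with `aₖⱼ ≠ 0` there; irreducibility and the connectedness of `ℝᴺ` would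
then make `ψ ≡ 0`.

Now fix `x`. Then `u = ψ(·, x)` satisfies `-u' + A(t, x) u < (λ + 1) u`, the slack being
`∫ κ(y - x) ψ(t, y) dy > 0`. Take the largest `c` with `c φ ≤ u`, where `φ` is the principal
eigenfunction at `x`; at a point where `uₖ = c φₖ` also `uₖ' = c φₖ'`, and cooperativity gives
`(A (u - c φ))ₖ ≥ 0`, so comparing the two equations there yields `λ₃(x) < λ + 1`.
-/

open MeasureTheory Set

theorem Function.Periodic.eq_zero_of_mul_le_deriv {u a : ℝ → ℝ} {T : ℝ} (hper : Periodic u T)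
    (hT : 0 < T) (hu : Differentiable ℝ u) (ha : Continuous a) (hnn : ∀ t, 0 ≤ u t)
    (hd : ∀ t, a t * u t ≤ deriv u t) {t₀ : ℝ} (h₀ : u t₀ = 0) (t : ℝ) : u t = 0 := by
  set g : ℝ → ℝ := fun s => u s * Real.exp (-∫ r in t₀..s, a r)
  have hg : ∀ s, HasDerivAt g ((deriv u s - a s * u s) * Real.exp (-∫ r in t₀..s, a r)) s := by
    intro s
    exact ((hu s).hasDerivAt.mul
      (ha.integral_hasStrictDerivAt t₀ s).hasDerivAt.fun_neg.exp).congr_deriv (by ring)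
  have hmono : Monotone g := monotone_of_deriv_nonneg (fun s => (hg s).differentiableAt)
    fun s => (hg s).deriv ▸ mul_nonneg (sub_nonneg.2 (hd s)) (Real.exp_pos _).le
  obtain ⟨s, hs, hts⟩ := hper.exists_mem_Ico hT t (t₀ - T)
  have hgs : g s = 0 := le_antisymm (by simpa [g, h₀] using hmono (by linarith [hs.2] : s ≤ t₀))
    (mul_nonneg (hnn s) (Real.exp_pos _).le)
  simpa [hts, g, (Real.exp_pos _).ne'] using hgs

section Cooperative

variable {ι : Type*} {B : Matrix ι ι ℝ} {v : ι → ℝ} {k : ι}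

theorem diag_mul_le_sum_mul_of_cooperative [Fintype ι] (hB : ∀ j, k ≠ j → 0 ≤ B k j)
    (hv : ∀ j, 0 ≤ v j) : B k k * v k ≤ ∑ j, B k j * v j := by
  simpa using Finset.sum_le_sum_of_subset_of_nonneg (f := fun j => B k j * v j)
    (Finset.subset_univ {k}) fun j _ hj =>
      mul_nonneg (hB j (Ne.symm (Finset.notMem_singleton.1 hj))) (hv j)

theorem mul_nonneg_of_cooperative (hB : ∀ j, k ≠ j → 0 ≤ B k j) (hv : ∀ j, 0 ≤ v j)
    (hvk : v k = 0) (j : ι) : 0 ≤ B k j * v j := by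
  rcases eq_or_ne k j with rfl | hkj
  · simp [hvk]
  · exact mul_nonneg (hB j hkj) (hv j)

end Cooperative

section Kernel

variable {E : Type*} [NormedAddCommGroup E] [MeasurableSpace E] [BorelSpace E] {μ : Measure E}
  [IsFiniteMeasureOnCompacts μ] {κ g : E → ℝ}

theorem integrable_kernel_mul (hκ : Continuous κ) (hκs : HasCompactSupport κ) (hg : Continuous g)
    (x : E) : Integrable (fun y => κ (y - x) * g y) μ :=
  ((hκ.comp (continuous_id.sub continuous_const)).mul hg).integrable_of_hasCompactSupport
    (hκs.comp_homeomorph (Homeomorph.subRight x)).mul_right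

theorem integral_kernel_mul_sub [μ.IsAddRightInvariant] (hκ : Continuous κ)
    (hκs : HasCompactSupport κ) (hκint : ∫ z, κ z ∂μ = 1) (hg : Continuous g) (x : E) (c : ℝ) :
    ∫ y, κ (y - x) * (g y - c) ∂μ = (∫ y, κ (y - x) * g y ∂μ) - c := by
  simp_rw [mul_sub]
  rw [integral_sub (integrable_kernel_mul hκ hκs hg x)
      (integrable_kernel_mul hκ hκs continuous_const x),
    integral_mul_const, integral_sub_right_eq_self κ x, hκint, one_mul]

theorem integral_kernel_mul_pos [μ.IsOpenPosMeasure] (hκ : Continuous κ)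
    (hκs : HasCompactSupport κ) (hκnn : ∀ z, 0 ≤ κ z) (hg : Continuous g) (hgnn : ∀ y, 0 ≤ g y)
    {x y : E} (hy : 0 < κ (y - x) * g y) : 0 < ∫ z, κ (z - x) * g z ∂μ :=
  ((hκ.comp (continuous_id.sub continuous_const)).mul
    hg).integral_pos_of_hasCompactSupport_nonneg_nonzero (hκs.comp_homeomorph (Homeomorph.subRight x)).mul_right
    (fun z => mul_nonneg (hκnn _) (hgnn z)) hy.ne'

theorem eq_zero_of_integral_kernel_mul_eq_zero [μ.IsOpenPosMeasure] (hκ : Continuous κ)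
    (hκs : HasCompactSupport κ) (hκnn : ∀ z, 0 ≤ κ z) (hg : Continuous g) (hgnn : ∀ y, 0 ≤ g y)
    {x y : E} (h : ∫ z, κ (z - x) * g z ∂μ = 0) (hy : 0 < κ (y - x)) : g y = 0 := by
  by_contra hne
  exact (integral_kernel_mul_pos hκ hκs hκnn hg hgnn
    (mul_pos hy ((hgnn y).lt_of_ne (Ne.symm hne)))).ne' h

end Kernel

theorem eq_univ_of_isClopen_of_irreducible {E ι : Type*} [TopologicalSpace E] [PreconnectedSpace E]
    {Z : ι → Set E} (hZ : ∀ k, IsClopen (Z k)) {R : E → ι → ι → Prop}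
    (hR : ∀ S : Set ι, S.Nonempty → Sᶜ.Nonempty → ∀ x, ∃ k ∈ S, ∃ j ∈ Sᶜ, R x k j)
    (hZR : ∀ x k j, x ∈ Z k → R x k j → x ∈ Z j) {k₀ : ι} (hk₀ : (Z k₀).Nonempty) (k : ι) :
    Z k = univ := by
  obtain ⟨x₀, hx₀⟩ := hk₀
  by_contra hk
  obtain ⟨i, hi, j, hj, hij⟩ :=
    hR {k | Z k = univ} ⟨k₀, (hZ k₀).eq_univ ⟨x₀, hx₀⟩⟩ ⟨k, hk⟩ x₀
  exact hj ((hZ j).eq_univ ⟨x₀, hZR x₀ i j (hi ▸ mem_univ x₀) hij⟩)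

theorem nonlocal_strong_maximum_principle {E ι : Type*} [NormedAddCommGroup E] [MeasurableSpace E]
    [BorelSpace E] [PreconnectedSpace E] {μ : Measure E} [IsFiniteMeasureOnCompacts μ]
    [μ.IsOpenPosMeasure] [Fintype ι]
    {κ : E → ℝ} (hκ : Continuous κ) (hκs : HasCompactSupport κ) (hκnn : ∀ z, 0 ≤ κ z)
    (hκ0 : 0 < κ 0) {A : ℝ → E → Matrix ι ι ℝ} (hAcont : ∀ x k, Continuous fun t => A t x k k)
    (hAcoop : ∀ t x, ∀ k j : ι, k ≠ j → 0 ≤ A t x k j)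
    (hAirr : ∀ S : Set ι, S.Nonempty → Sᶜ.Nonempty → ∀ t x, ∃ k ∈ S, ∃ j ∈ Sᶜ, A t x k j ≠ 0)
    {T : ℝ} (hT : 0 < T) {m : ℝ} {ψ : ℝ → E → ι → ℝ}
    (hψcont : ∀ t k, Continuous fun y => ψ t y k) (hψd : ∀ x k, Differentiable ℝ fun t => ψ t x k)
    (hψper : ∀ t x, ψ (t + T) x = ψ t x) (hψnn : ∀ t x k, 0 ≤ ψ t x k) (hψne : ∃ t x, ψ t x ≠ 0)
    (hψeq : ∀ t x k, deriv (fun r => ψ r x k) t =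
      (∫ y, κ (y - x) * ψ t y k ∂μ) + ∑ j, A t x k j * ψ t x j - m * ψ t x k)
    (t : ℝ) (x : E) (k : ι) : 0 < ψ t x k := by
  have hI : ∀ t x k, 0 ≤ ∫ y, κ (y - x) * ψ t y k ∂μ := fun t x k =>
    integral_nonneg fun y => mul_nonneg (hκnn _) (hψnn t y k)
  have htime : ∀ x k t₀, ψ t₀ x k = 0 → ∀ t, ψ t x k = 0 := by
    intro x k t₀ h₀
    refine Function.Periodic.eq_zero_of_mul_le_deriv (fun t => congrFun (hψper t x) k) hT
      (hψd x k) (a := fun t => A t x k k - m) ((hAcont x k).sub continuous_const)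
      (fun t => hψnn t x k) (fun t => ?_) h₀
    rw [hψeq, sub_mul]
    linarith [hI t x k, diag_mul_le_sum_mul_of_cooperative (hAcoop t x k) (hψnn t x)]
  set Z : ι → Set E := fun k => {x | ∀ t, ψ t x k = 0}
  have hvanish : ∀ x k, x ∈ Z k → ∀ t,
      (∫ y, κ (y - x) * ψ t y k ∂μ) = 0 ∧ ∑ j, A t x k j * ψ t x j = 0 := by
    intro x k hx t
    have hsum : 0 ≤ ∑ j, A t x k j * ψ t x j := Finset.sum_nonneg fun j _ =>
      mul_nonneg_of_cooperative (hAcoop t x k) (hψnn t x) (hx t) j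
    have h := hψeq t x k
    rw [show (fun r => ψ r x k) = fun _ => 0 from funext hx, deriv_const, hx t, mul_zero,
      sub_zero] at h
    constructor <;> linarith [hI t x k]
  have hclopen : ∀ k, IsClopen (Z k) := by
    refine fun k => ⟨?_, isOpen_iff_mem_nhds.2 fun x hx => ?_⟩
    · simp only [Z, ofPred_forall]
      exact isClosed_iInter fun t => isClosed_eq (hψcont t k) continuous_const
    · have hκx : IsOpen {y | 0 < κ (y - x)} :=
        isOpen_lt continuous_const (hκ.comp (continuous_id.sub continuous_const))
      filter_upwards [hκx.mem_nhds (by simpa using hκ0)] with y hy t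
      exact eq_zero_of_integral_kernel_mul_eq_zero hκ hκs hκnn (hψcont t k) (hψnn t · k)
        (hvanish x k hx t).1 hy
  have hcouple : ∀ x k j, x ∈ Z k → A 0 x k j ≠ 0 → x ∈ Z j := by
    intro x k j hx hkj
    have hterm := (Finset.sum_eq_zero_iff_of_nonneg fun j _ =>
      mul_nonneg_of_cooperative (hAcoop 0 x k) (hψnn 0 x) (hx 0) j).1 (hvanish x k hx 0).2 j
      (Finset.mem_univ j)
    exact htime x j 0 ((mul_eq_zero.1 hterm).resolve_left hkj)
  have hempty : ∀ k, Z k = ∅ := by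
    intro k₀
    by_contra hk₀
    have hall := eq_univ_of_isClopen_of_irreducible hclopen (fun S hS hSc => hAirr S hS hSc 0)
      hcouple (nonempty_iff_ne_empty.2 hk₀)
    obtain ⟨t, x, hx⟩ := hψne
    exact hx (funext fun k => (hall k ▸ mem_univ x : x ∈ Z k) t)
  refine (hψnn t x k).lt_of_ne fun h => ?_
  have hx : x ∈ Z k := htime x k t h.symm
  rwa [hempty k] at hx

section PeriodicComparison

variable {ι : Type*} [Fintype ι] [Nonempty ι] {T : ℝ} {u φ : ℝ → ι → ℝ}

theorem exists_touching_multiple_of_periodic (hT : 0 < T) (hu : Continuous u) (hφ : Continuous φ)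
    (hu_per : Function.Periodic u T) (hφ_per : Function.Periodic φ T) (hφpos : ∀ t k, 0 < φ t k) :
    ∃ c t₀ k₀, (∀ t k, c * φ t k ≤ u t k) ∧ u t₀ k₀ = c * φ t₀ k₀ := by
  set ρ : ℝ → ι → ℝ := fun t k => u t k / φ t k
  have hρ : ∀ k, Continuous fun t => ρ t k := fun k =>
    ((continuous_apply k).comp hu).div ((continuous_apply k).comp hφ) fun t => (hφpos t k).ne'
  have hρ_per : Function.Periodic ρ T := fun t => by simp only [ρ, hu_per t, hφ_per t]
  have hcpt : IsCompact (⋃ k, (fun t => ρ t k) '' Icc 0 T) :=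
    isCompact_iUnion fun k => isCompact_Icc.image (hρ k)
  obtain ⟨c, hc_mem, hc_least⟩ := hcpt.exists_isLeast
    (nonempty_iUnion.2 ⟨Classical.arbitrary ι, (nonempty_Icc.2 hT.le).image _⟩)
  obtain ⟨k₀, t₀, -, hck₀⟩ := mem_iUnion.1 hc_mem
  refine ⟨c, t₀, k₀, fun t k => ?_, ?_⟩
  · obtain ⟨s, hs, hts⟩ := hρ_per.exists_mem_Ico₀ hT t
    have hc : c ≤ ρ t k := hts ▸ hc_least (mem_iUnion.2 ⟨k, s, Ico_subset_Icc_self hs, rfl⟩)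
    exact (le_div_iff₀ (hφpos t k)).1 hc
  · rw [← hck₀]
    exact (div_mul_cancel₀ _ (hφpos t₀ k₀).ne').symm

theorem lt_of_periodic_strict_supersolution {A : ℝ → Matrix ι ι ℝ}
    (hA : ∀ t, ∀ k j : ι, k ≠ j → 0 ≤ A t k j) (hT : 0 < T) (hu : Differentiable ℝ u)
    (hφ : Differentiable ℝ φ) (hu_per : Function.Periodic u T) (hφ_per : Function.Periodic φ T)
    (hunn : ∀ t k, 0 ≤ u t k) (hφpos : ∀ t k, 0 < φ t k) {μ₀ m : ℝ}
    (hφeq : ∀ t k, -deriv φ t k + ∑ j, A t k j * φ t j = μ₀ * φ t k)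
    (hueq : ∀ t k, -deriv u t k + ∑ j, A t k j * u t j < m * u t k) : μ₀ < m := by
  obtain ⟨c, t₀, k₀, hle, htouch⟩ :=
    exists_touching_multiple_of_periodic hT hu.continuous hφ.continuous hu_per hφ_per hφpos
  have hderiv : deriv u t₀ k₀ = c * deriv φ t₀ k₀ := by
    have hu' := differentiableAt_pi.1 (hu t₀) k₀
    have hφ' := (differentiableAt_pi.1 (hφ t₀) k₀).const_mul c
    have hmin : IsLocalMin (fun t => u t k₀ - c * φ t k₀) t₀ :=
      Filter.Eventually.of_forall fun t => by simpa [htouch] using hle t k₀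
    have h := hmin.deriv_eq_zero
    rw [deriv_fun_sub hu' hφ', deriv_const_mul _ (differentiableAt_pi.1 (hφ t₀) k₀)] at h
    rw [deriv_pi (differentiableAt_pi.1 (hu t₀)), deriv_pi (differentiableAt_pi.1 (hφ t₀))]
    linarith
  have hsum : c * ∑ j, A t₀ k₀ j * φ t₀ j ≤ ∑ j, A t₀ k₀ j * u t₀ j := by
    have hgap : ∑ j, A t₀ k₀ j * u t₀ j - c * ∑ j, A t₀ k₀ j * φ t₀ j =
        ∑ j, A t₀ k₀ j * (u t₀ j - c * φ t₀ j) := by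
      rw [Finset.mul_sum, ← Finset.sum_sub_distrib]
      exact Finset.sum_congr rfl fun j _ => by ring
    have := Finset.sum_nonneg fun j (_ : j ∈ Finset.univ) =>
      mul_nonneg_of_cooperative (hA t₀ k₀) (fun j => sub_nonneg.2 (hle t₀ j))
        (sub_eq_zero.2 htouch) j
    linarith
  have hcφ : -(c * deriv φ t₀ k₀) + c * ∑ j, A t₀ k₀ j * φ t₀ j = μ₀ * (c * φ t₀ k₀) := by
    linear_combination c * hφeq t₀ k₀
  have hu₀ := hueq t₀ k₀
  rw [hderiv, htouch] at hu₀
  refine lt_of_mul_lt_mul_right (a := u t₀ k₀) ?_ (hunn t₀ k₀)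
  rw [htouch]
  linarith

end PeriodicComparison

theorem stmt9_general
    (N K : ℕ) (T : ℝ) (hT : 0 < T)
    (κ : EuclideanSpace ℝ (Fin N) → ℝ)
    (hκC : ContDiff ℝ 1 κ) (hκsupp : HasCompactSupport κ)
    (hκnn : ∀ z, 0 ≤ κ z) (hκ0 : 0 < κ 0)
    (hκint : ∫ z, κ z = 1)
    (A : ℝ → EuclideanSpace ℝ (Fin N) → Matrix (Fin K) (Fin K) ℝ)
    (hAcont : ∀ k j, Continuous (fun q : ℝ × EuclideanSpace ℝ (Fin N) => A q.1 q.2 k j))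
    (hAcoop : ∀ t x, ∀ k j : Fin K, k ≠ j → 0 ≤ A t x k j)
    (hAirr : ∀ S : Set (Fin K), S.Nonempty → Sᶜ.Nonempty → ∀ t x,
      ∃ k ∈ S, ∃ j ∈ Sᶜ, A t x k j ≠ 0)
    -- `λ₃(x)`: the principal eigenvalue of `−φ′ + A(t,x)φ = λφ`, `φ(t+T) = φ(t)`
    (lam3 : EuclideanSpace ℝ (Fin N) → ℝ)
    (hlam3 : ∀ x, ∃ φ : ℝ → Fin K → ℝ, ContDiff ℝ 1 φ ∧
      (∀ t, φ (t + T) = φ t) ∧ (∀ t k, 0 < φ t k) ∧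
      ∀ t k, -(deriv φ t k) + ∑ j, A t x k j * φ t j = lam3 x * φ t k)
    -- the eigenpair `(λ, ψ)`
    (lam : ℝ) (ψ : ℝ → EuclideanSpace ℝ (Fin N) → Fin K → ℝ)
    (hψcont : Continuous (fun q : ℝ × EuclideanSpace ℝ (Fin N) => ψ q.1 q.2))
    (hψC1 : ∀ x k, ContDiff ℝ 1 fun t => ψ t x k)
    (hψper : ∀ t x, ψ (t + T) x = ψ t x)
    (hψnn : ∀ t x k, 0 ≤ ψ t x k)
    (hψne : ∃ t x, ψ t x ≠ 0)
    (hψeq : ∀ t x k,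
      -(deriv (fun r => ψ r x k) t) + (∫ y, κ (y - x) * (ψ t y k - ψ t x k))
        + ∑ j, A t x k j * ψ t x j = lam * ψ t x k) :
    ∀ x, -1 + lam3 x < lam := by
  have hψy : ∀ t k, Continuous fun y => ψ t y k := fun t k =>
    (continuous_apply k).comp (hψcont.comp (Continuous.prodMk_right t))
  have hψd : ∀ x k, Differentiable ℝ fun t => ψ t x k := fun x k =>
    (hψC1 x k).differentiable one_ne_zero
  have hψderiv : ∀ t x k, deriv (fun r => ψ r x k) t =
      (∫ y, κ (y - x) * ψ t y k) + ∑ j, A t x k j * ψ t x j - (lam + 1) * ψ t x k := by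
    intro t x k
    have h := hψeq t x k
    rw [integral_kernel_mul_sub hκC.continuous hκsupp hκint (hψy t k)] at h
    linarith
  have hψpos := nonlocal_strong_maximum_principle hκC.continuous hκsupp hκnn hκ0
    (fun x k => (hAcont k k).comp (Continuous.prodMk_left x)) hAcoop hAirr hT hψy hψd hψper hψnn
    hψne hψderiv
  have : Nonempty (Fin K) := let ⟨_, _, h⟩ := hψne; ⟨(Function.ne_iff.1 h).choose⟩
  intro x
  obtain ⟨φ, hφC, hφper, hφpos, hφeq⟩ := hlam3 x
  suffices lam3 x < lam + 1 by linarith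
  refine lt_of_periodic_strict_supersolution (u := fun t => ψ t x) (hAcoop · x) hT
    (differentiable_pi.2 (hψd x)) (hφC.differentiable one_ne_zero) (hψper · x) hφper
    (hψnn · x) hφpos hφeq fun t k => ?_
  rw [deriv_pi fun k => hψd x k t]
  dsimp only
  rw [hψderiv]
  have hI := integral_kernel_mul_pos (μ := volume) hκC.continuous hκsupp hκnn (hψy t k)
    (hψnn t · k) (x := x) (y := x) (by simpa using mul_pos hκ0 (hψpos t x k))
  linarith

/-- If `λ` admits a nonnegative, not identically zero,
time- and space-periodic eigenfunction for the periodic nonlocal dispersal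
problem on `ℝ^N`, then `λ > max_{x ∈ ℝ^N} h₃(x)` where `h₃(x) = −1 + λ₃(x)`
and `λ₃(x)` is the principal eigenvalue of `−φ′ + A(t,x)φ = λ₃(x)φ`,
`φ(t+T) = φ(t)`. -/
theorem stmt9
    (N K : ℕ) (hN : 1 ≤ N) (hK : 2 ≤ K) (T : ℝ) (hT : 0 < T)
    (p : Fin N → ℝ) (hp : ∀ l, 0 < p l)
    (κ : EuclideanSpace ℝ (Fin N) → ℝ)
    (hκC : ContDiff ℝ 1 κ) (hκsupp : HasCompactSupport κ)
    (hκnn : ∀ z, 0 ≤ κ z) (hκ0 : 0 < κ 0)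
    (hκint : ∫ z, κ z = 1)
    (A : ℝ → EuclideanSpace ℝ (Fin N) → Matrix (Fin K) (Fin K) ℝ)
    (hAcont : ∀ k j, Continuous (fun q : ℝ × EuclideanSpace ℝ (Fin N) => A q.1 q.2 k j))
    (hAper : ∀ t x, A (t + T) x = A t x)
    (hAsper : ∀ t x l, A t (x + EuclideanSpace.single l (p l)) = A t x)
    (hAcoop : ∀ t x, ∀ k j : Fin K, k ≠ j → 0 ≤ A t x k j)
    (hAirr : ∀ S : Set (Fin K), S.Nonempty → Sᶜ.Nonempty → ∀ t x,
      ∃ k ∈ S, ∃ j ∈ Sᶜ, A t x k j ≠ 0)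
    -- `λ₃(x)`: the principal eigenvalue of `−φ′ + A(t,x)φ = λφ`, `φ(t+T) = φ(t)`
    (lam3 : EuclideanSpace ℝ (Fin N) → ℝ)
    (hlam3 : ∀ x, ∃ φ : ℝ → Fin K → ℝ, ContDiff ℝ 1 φ ∧
      (∀ t, φ (t + T) = φ t) ∧ (∀ t k, 0 < φ t k) ∧
      ∀ t k, -(deriv φ t k) + ∑ j, A t x k j * φ t j = lam3 x * φ t k)
    (hlam3cont : Continuous lam3)
    -- the eigenpair `(λ, ψ)`
    (lam : ℝ) (ψ : ℝ → EuclideanSpace ℝ (Fin N) → Fin K → ℝ)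
    (hψcont : Continuous (fun q : ℝ × EuclideanSpace ℝ (Fin N) => ψ q.1 q.2))
    (hψC1 : ∀ x k, ContDiff ℝ 1 fun t => ψ t x k)
    (hψper : ∀ t x, ψ (t + T) x = ψ t x)
    (hψsper : ∀ t x l, ψ t (x + EuclideanSpace.single l (p l)) = ψ t x)
    (hψnn : ∀ t x k, 0 ≤ ψ t x k)
    (hψne : ∃ t x, ψ t x ≠ 0)
    (hψeq : ∀ t x k,
      -(deriv (fun r => ψ r x k) t) + (∫ y, κ (y - x) * (ψ t y k - ψ t x k))
        + ∑ j, A t x k j * ψ t x j = lam * ψ t x k) :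
    ∀ x, -1 + lam3 x < lam :=
  stmt9_general N K T hT κ hκC hκsupp hκnn hκ0 hκint A hAcont hAcoop hAirr lam3 hlam3 lam ψ hψcont
    hψC1 hψper hψnn hψne hψeq
end
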